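/- In any orthomodular lattice, (a → c) → c = a' → c, where a → c := a' ∪ (a ∩ c). -/

import Mathlib

/-- An orthomodular lattice. -/
class OrthomodularLattice (α : Type*) extends Lattice α, BoundedOrder α, Compl α where
  sup_compl : ∀ a : α, a ⊔ aᶜ = ⊤
  inf_compl : ∀ a : α, a ⊓ aᶜ = ⊥
  compl_antitone : ∀ a b : α, a ≤ b → bᶜ ≤ aᶜ
  compl_compl : ∀ a : α, aᶜᶜ = a
  orthomodular : ∀ a b : α, a ≤ b → b = a ⊔ (aᶜ ⊓ b)

/-- The Sasaki hook `a → b := a' ∪ (a ∩ b)`. -/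
def shook {α : Type*} [OrthomodularLattice α] (a b : α) : α := aᶜ ⊔ (a ⊓ b)

/-!
Put `x := a → c` and `r := a' → c = a ∪ (a' ∩ c)`. Orthomodularity splits `a` as
`(a ∩ c) ∪ x'`, which gives `r ≤ x → c`. Since `r' ≤ a' ≤ x` and `x ∩ (x → c) = x ∩ c`,
the meet `r' ∩ (x → c)` lies below `r' ∩ c = ⊥`; in an orthomodular lattice `r ≤ s` and
`r' ∩ s = ⊥` force `r = s`.
-/

namespace OrthomodularLattice

variable {α : Type*} [OrthomodularLattice α] {a b : α}

theorem compl_le_compl (h : a ≤ b) : bᶜ ≤ aᶜ := compl_antitone a b h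

theorem compl_sup (a b : α) : (a ⊔ b)ᶜ = aᶜ ⊓ bᶜ := by
  refine le_antisymm (le_inf (compl_le_compl le_sup_left) (compl_le_compl le_sup_right)) ?_
  rw [← compl_compl (aᶜ ⊓ bᶜ)]
  refine compl_le_compl (sup_le ?_ ?_)
  · simpa only [compl_compl] using compl_le_compl (inf_le_left : aᶜ ⊓ bᶜ ≤ aᶜ)
  · simpa only [compl_compl] using compl_le_compl (inf_le_right : aᶜ ⊓ bᶜ ≤ bᶜ)

theorem compl_inf (a b : α) : (a ⊓ b)ᶜ = aᶜ ⊔ bᶜ := by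
  rw [← compl_compl (aᶜ ⊔ bᶜ), compl_sup, compl_compl, compl_compl]

theorem inf_compl_sup_of_le (h : b ≤ a) : a ⊓ (aᶜ ⊔ b) = b := by
  have hsplit := orthomodular aᶜ bᶜ (compl_le_compl h)
  rw [compl_compl] at hsplit
  calc a ⊓ (aᶜ ⊔ b) = (aᶜ ⊔ a ⊓ bᶜ)ᶜ := by rw [compl_sup, compl_inf, compl_compl, compl_compl]
    _ = b := by rw [← hsplit, compl_compl]

theorem eq_of_le_of_compl_inf_eq_bot (hle : a ≤ b) (hbot : aᶜ ⊓ b = ⊥) : a = b := by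
  rw [orthomodular a b hle, hbot, sup_bot_eq]

theorem shook_compl (a b : α) : shook aᶜ b = a ⊔ (aᶜ ⊓ b) := by
  rw [shook, compl_compl]

theorem compl_le_shook (a b : α) : aᶜ ≤ shook a b := le_sup_left

theorem inf_le_shook (a b : α) : a ⊓ b ≤ shook a b := le_sup_right

theorem compl_shook (a b : α) : (shook a b)ᶜ = a ⊓ (a ⊓ b)ᶜ := by
  rw [shook, compl_sup, compl_compl]

theorem compl_shook_le (a b : α) : (shook a b)ᶜ ≤ a := by
  rw [compl_shook]
  exact inf_le_left

theorem compl_shook_inf_eq_bot (a b : α) : (shook a b)ᶜ ⊓ b = ⊥ := by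
  refine le_bot_iff.mp ?_
  calc (shook a b)ᶜ ⊓ b ≤ (a ⊓ b) ⊓ (a ⊓ b)ᶜ := by
        rw [compl_shook]
        exact le_inf (le_inf (inf_le_left.trans inf_le_left) inf_le_right)
          (inf_le_left.trans inf_le_right)
    _ = ⊥ := inf_compl _

theorem inf_sup_compl_shook (a b : α) : a ⊓ b ⊔ (shook a b)ᶜ = a := by
  rw [compl_shook, inf_comm a (a ⊓ b)ᶜ, ← orthomodular (a ⊓ b) a inf_le_left]

theorem inf_shook (a b : α) : a ⊓ shook a b = a ⊓ b :=
  inf_compl_sup_of_le inf_le_left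

end OrthomodularLattice

open OrthomodularLattice in
/-- In any orthomodular lattice, `(a → c) → c = a' → c`. -/
theorem stmt_11 {α : Type*} [OrthomodularLattice α] (a c : α) :
    shook (shook a c) c = shook aᶜ c := by
  set x := shook a c
  have hx_le : aᶜ ≤ x := compl_le_shook a c
  have hle : shook aᶜ c ≤ shook x c :=
    calc shook aᶜ c = (a ⊓ c ⊔ xᶜ) ⊔ (aᶜ ⊓ c) := by rw [shook_compl, inf_sup_compl_shook]
      _ ≤ shook x c := by
        refine sup_le (sup_le ?_ (compl_le_shook x c)) ?_
        · exact (le_inf (inf_le_shook a c) inf_le_right).trans (inf_le_shook x c)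
        · exact (inf_le_inf_right c hx_le).trans (inf_le_shook x c)
  have hcompl_le : (shook aᶜ c)ᶜ ≤ x := (compl_shook_le aᶜ c).trans hx_le
  have hbot : (shook aᶜ c)ᶜ ⊓ shook x c = ⊥ := by
    refine le_bot_iff.mp ?_
    calc (shook aᶜ c)ᶜ ⊓ shook x c = (shook aᶜ c)ᶜ ⊓ (x ⊓ c) := by
          rw [← inf_shook x c, ← inf_assoc, inf_of_le_left hcompl_le]
      _ ≤ (shook aᶜ c)ᶜ ⊓ c := inf_le_inf_left _ inf_le_right
      _ = ⊥ := compl_shook_inf_eq_bot aᶜ c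
  exact (eq_of_le_of_compl_inf_eq_bot hle hbot).symm
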